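/- arXiv:1708.07944 — 5 statements merged into one kernel-verified Lean document; each statement's English description precedes it below -/
import Mathlib

section
/- If every basic open subset of Hom_k(D,k̄) is nonempty, then every basic open subset of Hom_k(D,k̄) is dense in the Zariski topology on Hom_k(D,k̄). -/
set_option linter.unusedSectionVars false
set_option linter.unusedVariables false

section Base

variable {Ω : Type*} [Field Ω] [IsAlgClosed Ω] [CharZero Ω]
variable (k : Type*) [Field k] [Algebra k Ω]
variable (kbar : Type*) [Field kbar] [Algebra k kbar] [IsAlgClosure k kbar]

/-- `Γ` is (the carrier set of) a finitely generated subgroup of the additive group `(Ω,+)`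
or of the multiplicative group `(Ω∖{0},·)`. -/
def IsFGAddOrMulSubgroup (Γ : Set Ω) : Prop :=
  (∃ H : AddSubgroup Ω, H.FG ∧ Γ = (H : Set Ω)) ∨
  (∃ H : Subgroup Ωˣ, H.FG ∧ Γ = Units.val '' (H : Set Ωˣ))

/-- The `D`-subalgebra `D[Γ]` of `Ω` generated by `Γ`. -/
def algAdj (D : Subalgebra k Ω) (Γ : Set Ω) : Subalgebra k Ω :=
  Algebra.adjoin k ((D : Set Ω) ∪ Γ)

theorem le_algAdj (D : Subalgebra k Ω) (Γ : Set Ω) : D ≤ algAdj k D Γ :=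
  fun _ hx => Algebra.subset_adjoin (Set.mem_union_left _ hx)

theorem subset_algAdj (D : Subalgebra k Ω) (Γ : Set Ω) :
    Γ ⊆ (algAdj k D Γ : Set Ω) :=
  fun _ hx => Algebra.subset_adjoin (Set.mem_union_right _ hx)

/-- `ℬ(D,Γ)`: restrictions to `D` of the `k`-homomorphisms `D[Γ] → k̄` injective on `Γ`. -/
def specB (D : Subalgebra k Ω) (Γ : Set Ω) : Set (↥D →ₐ[k] kbar) :=
  { φ | ∃ ψ : ↥(algAdj k D Γ) →ₐ[k] kbar,
      (∀ (a b : Ω) (ha : a ∈ Γ) (hb : b ∈ Γ),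
        ψ ⟨a, subset_algAdj k D Γ ha⟩ = ψ ⟨b, subset_algAdj k D Γ hb⟩ → a = b) ∧
      ψ.comp (Subalgebra.inclusion (le_algAdj k D Γ)) = φ }

/-- A basic open subset of `Hom_k(D,k̄)`: a finite intersection of sets `ℬ(D,Γ)`. -/
def IsBasicOpen (D : Subalgebra k Ω) (U : Set (↥D →ₐ[k] kbar)) : Prop :=
  ∃ s : Finset (Set Ω), s.Nonempty ∧ (∀ Γ ∈ s, IsFGAddOrMulSubgroup Γ) ∧
    U = ⋂ Γ ∈ s, specB k kbar D Γ

/-- The Zariski closed subset `𝒱(I)` of `Hom_k(D,k̄)`. -/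
def specV (D : Subalgebra k Ω) (I : Ideal ↥D) : Set (↥D →ₐ[k] kbar) :=
  { φ | ∀ a ∈ I, φ a = 0 }

/-- Density in the Zariski topology on `Hom_k(D,k̄)` (whose closed sets are the `𝒱(I)`). -/
def ZariskiDense (D : Subalgebra k Ω) (U : Set (↥D →ₐ[k] kbar)) : Prop :=
  ∀ I : Ideal ↥D, U ⊆ specV k kbar D I → specV k kbar D I = Set.univ

end Base

/-- Corollary 2.4 of the paper. If every basic open subset of `Hom_k(D,k̄)`
is nonempty, then every basic open subset of `Hom_k(D,k̄)` is Zariski dense. -/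
theorem basicOpen_zariskiDense_of_nonempty
    {Ω : Type*} [Field Ω] [IsAlgClosed Ω] [CharZero Ω]
    (k : Type*) [Field k] [Algebra k Ω]
    (kbar : Type*) [Field kbar] [Algebra k kbar] [IsAlgClosure k kbar]
    (D : Subalgebra k Ω) (hD : D.FG)
    (hne : ∀ U : Set (↥D →ₐ[k] kbar), IsBasicOpen k kbar D U → U.Nonempty) :
    ∀ U : Set (↥D →ₐ[k] kbar), IsBasicOpen k kbar D U → ZariskiDense k kbar D U := by
  classical
  intro U hU I hUI
  by_contra hne'
  have hex : ∃ φ₀ : ↥D →ₐ[k] kbar, φ₀ ∉ specV k kbar D I := by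
    by_contra h; push_neg at h; exact hne' (Set.eq_univ_of_forall h)
  obtain ⟨φ₀, hφ₀⟩ := hex
  simp only [specV, Set.mem_setOf_eq] at hφ₀
  push_neg at hφ₀
  obtain ⟨a, haI, ha0⟩ := hφ₀
  have hane : (a : Ω) ≠ 0 := by
    intro h
    exact ha0 (by rw [show a = 0 from Subtype.ext h, map_zero])
  set u : Ωˣ := Units.mk0 (a : Ω) hane with hu
  set Γc : Set Ω := Units.val '' ((Subgroup.closure {u} : Subgroup Ωˣ) : Set Ωˣ) with hΓc
  obtain ⟨s, hsne, hsfg, hsU⟩ := hU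
  set s' : Finset (Set Ω) := insert Γc s with hs'
  have hU' : IsBasicOpen k kbar D (⋂ Γ ∈ s', specB k kbar D Γ) := by
    refine ⟨s', ⟨Γc, Finset.mem_insert_self _ _⟩, ?_, rfl⟩
    intro Γ hΓ
    rcases Finset.mem_insert.mp hΓ with h | h
    · subst h; exact Or.inr ⟨Subgroup.closure {u}, ⟨{u}, by simp⟩, rfl⟩
    · exact hsfg Γ h
  obtain ⟨φ, hφ⟩ := hne _ hU'
  simp only [Set.mem_iInter] at hφ
  have hφU : φ ∈ U := by
    rw [hsU]
    simp only [Set.mem_iInter]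
    exact fun Γ hΓ => hφ Γ (Finset.mem_insert_of_mem hΓ)
  have hφa : φ a = 0 := hUI hφU a haI
  obtain ⟨ψ, hinj, hcomp⟩ := hφ Γc (Finset.mem_insert_self _ _)
  have hcmem : (a : Ω) ∈ Γc := ⟨u, Subgroup.subset_closure rfl, rfl⟩
  have hcinv : (a : Ω)⁻¹ ∈ Γc :=
    ⟨u⁻¹, Subgroup.inv_mem _ (Subgroup.subset_closure rfl), by simp [hu]⟩
  have h1 : (a : Ω) ∈ algAdj k D Γc := subset_algAdj k D Γc hcmem
  have h2 : (a : Ω)⁻¹ ∈ algAdj k D Γc := subset_algAdj k D Γc hcinv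
  have hmul : (⟨(a:Ω), h1⟩ : ↥(algAdj k D Γc)) * ⟨(a:Ω)⁻¹, h2⟩ = 1 := by
    ext; simp [mul_inv_cancel₀ hane]
  have hone := congrArg ψ hmul
  rw [map_mul, map_one] at hone
  have hne0 : ψ ⟨(a:Ω), h1⟩ ≠ 0 := left_ne_zero_of_mul_eq_one hone
  apply hne0
  have hψφ : ψ ⟨(a:Ω), h1⟩ = φ a := by
    rw [← hcomp]; rfl
  rw [hψφ, hφa]
end

section
/- Let K be a number field and let Γ be a finitely generated subgroup of the multiplicative group K^×. Then rad_K(Γ) is a finitely generated group. -/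
/-!
Let `S` be the finite set of primes at which some generator of `Γ` has nonzero valuation. Then
`Γ` consists of `S`-units, and so does its radical, because valuations take values in the
torsion-free group `ℤ`. The valuations at the primes of `S` map the `S`-units to `ℤ^S` with
kernel the units of `𝓞 K`, which are finitely generated by Dirichlet's unit theorem; hence the
`S`-units are finitely generated, and so is their subgroup `rad_K(Γ)`.
-/

/-- The radical `rad_K(Γ) = { α ∈ K^× : α^l ∈ Γ for some l > 0 }` of a subgroup `Γ` of `K^×`. -/
def Subgroup.radOf {K : Type*} [Field K] (Γ : Subgroup Kˣ) : Subgroup Kˣ where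
  carrier := { α : Kˣ | ∃ l : ℕ, 0 < l ∧ α ^ l ∈ Γ }
  one_mem' := ⟨1, Nat.one_pos, by simpa using Γ.one_mem⟩
  mul_mem' := by
    rintro a b ⟨l, hl, ha⟩ ⟨j, hj, hb⟩
    refine ⟨l * j, Nat.mul_pos hl hj, ?_⟩
    rw [mul_pow]
    exact Γ.mul_mem (by rw [pow_mul]; exact pow_mem ha j)
      (by rw [mul_comm l j, pow_mul]; exact pow_mem hb l)
  inv_mem' := by
    rintro a ⟨l, hl, ha⟩
    exact ⟨l, hl, by rw [inv_pow]; exact Γ.inv_mem ha⟩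

namespace Subgroup

theorem FG.of_le {G : Type*} [CommGroup G] {H U : Subgroup G} (hU : U.FG) (hHU : H ≤ U) :
    H.FG := by
  have : Group.FG U := (Group.fg_iff_subgroup_fg U).mpr hU
  have hfg : (H.subgroupOf U).FG := by
    rw [fg_iff_add_fg]
    exact (Submodule.fg_iff_addSubgroup_fg _).mp
      (IsNoetherian.noetherian (AddSubgroup.toIntSubmodule (H.subgroupOf U).toAddSubgroup))
  rw [← Group.fg_iff_subgroup_fg] at hfg ⊢
  exact Group.fg_of_surjective (f := (subgroupOfEquivOfLe hHU).toMonoidHom)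
    (subgroupOfEquivOfLe hHU).surjective

theorem FG.of_map_of_inf_ker {G A : Type*} [Group G] [Group A] (f : G →* A) {H : Subgroup G}
    (hmap : (H.map f).FG) (hker : (H ⊓ f.ker).FG) : H.FG := by
  obtain ⟨t, ht⟩ := hmap
  obtain ⟨u, hu⟩ := hker
  have hlift : ∀ a ∈ t, ∃ g ∈ H, f g = a := fun a ha =>
    mem_map.mp (ht ▸ subset_closure ha)
  choose! lift hlift_mem hlift_eq using hlift
  classical
  set L := closure (lift '' t)
  have hLH : L ≤ H := closure_le _ |>.mpr <| Set.image_subset_iff.mpr fun a ha => hlift_mem a ha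
  have hLmap : L.map f = H.map f := by
    rw [MonoidHom.map_closure, Set.image_image, Set.image_congr hlift_eq, Set.image_id', ht]
  refine ⟨t.image lift ∪ u, le_antisymm ?_ fun g hg => ?_⟩
  · rw [closure_le, Finset.coe_union, Finset.coe_image]
    exact Set.union_subset (subset_closure.trans hLH) (subset_closure.trans (hu ▸ inf_le_left))
  · obtain ⟨c, hcL, hc⟩ := mem_map.mp (hLmap ▸ mem_map_of_mem f hg)
    have hker : c⁻¹ * g ∈ H ⊓ f.ker :=
      mem_inf.mpr ⟨mul_mem (inv_mem (hLH hcL)) hg, by simp [hc]⟩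
    rw [← mul_inv_cancel_left c g, Finset.coe_union, closure_union, Finset.coe_image]
    exact mul_mem (mem_sup_left hcL) (mem_sup_right (hu ▸ hker))

end Subgroup

section DedekindDomain

open IsDedekindDomain HeightOneSpectrum

variable {R : Type*} [CommRing R] [IsDedekindDomain R] {K : Type*} [Field K] [Algebra R K]
  [IsFractionRing R K]

namespace IsDedekindDomain.HeightOneSpectrum

theorem finite_setOf_valuationOfNeZero_ne_one (x : Kˣ) :
    {v : HeightOneSpectrum R | v.valuationOfNeZero x ≠ 1}.Finite := by
  refine ((Support.finite R (x : K)).union (Support.finite R ((x⁻¹ : Kˣ) : K))).subset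
    fun v hv => ?_
  simp only [Set.mem_union, Support, Set.mem_ofPred_eq, ← valuationOfNeZero_eq, map_inv] at hv ⊢
  norm_cast
  rw [one_lt_inv']
  exact hv.lt_or_gt.symm

end IsDedekindDomain.HeightOneSpectrum

namespace Set

theorem mem_unit_iff {S : Set (HeightOneSpectrum R)} {x : Kˣ} :
    x ∈ S.unit K ↔ ∀ v ∉ S, v.valuationOfNeZero x = 1 := by
  refine forall₂_congr fun v _ => ?_
  rw [← valuationOfNeZero_eq, ← WithZero.coe_one, WithZero.coe_inj]

variable (K) in
noncomputable def unitEmptyEquivUnits : (∅ : Set (HeightOneSpectrum R)).unit K ≃* Rˣ :=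
  (unitEquivUnitsInteger ∅ K).trans <| Units.mapEquiv <|
    ((Subalgebra.equivOfEq _ _ (integer_empty R K)).trans
      (Algebra.botEquivOfInjective (IsFractionRing.injective R K))).toMulEquiv

variable {S : Set (HeightOneSpectrum R)} (K)

theorem unit_empty_fg [Group.FG Rˣ] : ((∅ : Set (HeightOneSpectrum R)).unit K).FG :=
  (Group.fg_iff_subgroup_fg _).mp <|
    Group.fg_of_surjective (G := Rˣ) (f := (unitEmptyEquivUnits (R := R) K).symm.toMonoidHom)
      (unitEmptyEquivUnits (R := R) K).symm.surjective

theorem unit_fg [Group.FG Rˣ] (hS : S.Finite) : (S.unit K).FG := by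
  have : Finite S := hS.to_subtype
  let f : Kˣ →* (S → Multiplicative ℤ) := MonoidHom.pi fun v => v.1.valuationOfNeZero
  refine .of_map_of_inf_ker f ((Group.fg_def.mp inferInstance).of_le le_top) <|
    (unit_empty_fg (R := R) K).of_le fun x hx => mem_unit_iff.mpr fun v _ => ?_
  by_cases hv : v ∈ S
  · exact congrFun (f.mem_ker.mp hx.2) ⟨v, hv⟩
  · exact mem_unit_iff.mp hx.1 v hv

end Set

namespace Subgroup

theorem exists_finite_le_unit {Γ : Subgroup Kˣ} (hΓ : Γ.FG) :
    ∃ S : Set (HeightOneSpectrum R), S.Finite ∧ Γ ≤ S.unit K := by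
  obtain ⟨T, rfl⟩ := hΓ
  refine ⟨⋃ x ∈ T, {v | v.valuationOfNeZero x ≠ 1},
    T.finite_toSet.biUnion fun x _ => finite_setOf_valuationOfNeZero_ne_one x, ?_⟩
  refine (closure_le _).mpr fun x hx => Set.mem_unit_iff.mpr fun v hv => ?_
  by_contra hne
  exact hv (Set.mem_biUnion hx hne)

theorem radOf_le_unit {S : Set (HeightOneSpectrum R)} {Γ : Subgroup Kˣ}
    (hΓS : Γ ≤ S.unit K) : Γ.radOf ≤ S.unit K := by
  rintro x ⟨l, hl, hx⟩
  refine Set.mem_unit_iff.mpr fun v hv => ?_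
  have hxl := Set.mem_unit_iff.mp (hΓS hx) v hv
  rw [map_pow, pow_eq_one_iff] at hxl
  exact hxl.resolve_right hl.ne'

variable (R) in
theorem FG.radOf [Group.FG Rˣ] {Γ : Subgroup Kˣ} (hΓ : Γ.FG) : Γ.radOf.FG := by
  obtain ⟨S, hS, hΓS⟩ := exists_finite_le_unit (R := R) hΓ
  exact (Set.unit_fg K hS).of_le (radOf_le_unit hΓS)

end Subgroup

end DedekindDomain

open NumberField

/-- Lemma 2.15 of the paper. -/
theorem rad_fg_of_numberField
    (K : Type*) [Field K] [NumberField K]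
    (Γ : Subgroup Kˣ) (hΓ : Γ.FG) : (Subgroup.radOf Γ).FG := by
  have : Group.FG (𝓞 K)ˣ := Group.fg_iff_monoid_fg.mpr inferInstance
  exact hΓ.radOf (𝓞 K)
end

section
/- Let f ∈ D[y] be a polynomial in one variable with coefficients in D. Then there exists a finitely generated subgroup Γ of the additive group (Ω,+) such that for every φ ∈ ℬ(D,Γ), the set of integer zeroes {n ∈ ℤ : f(n) = 0} of f equals the set of integer zeroes {n ∈ ℤ : (φ(f))(n) = 0} of the polynomial φ(f) ∈ k̄[y] obtained by applying φ to the coefficients of f (here integers are regarded as elements of D and of k̄ via the canonical ring maps). -/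
set_option linter.unusedSectionVars false
set_option linter.unusedVariables false

set_option linter.unusedSectionVars false
set_option linter.unusedVariables false

/-- Lemma 2.22 of the paper. For `f ∈ D[y]` there is a finitely generated
subgroup `Γ` of `(Ω,+)` such that every `φ ∈ ℬ(D,Γ)` preserves the set of integer zeroes of
`f`. -/
theorem integer_zeroes_specialization
    {Ω : Type*} [Field Ω] [IsAlgClosed Ω] [CharZero Ω]
    (k : Type*) [Field k] [Algebra k Ω]
    (kbar : Type*) [Field kbar] [Algebra k kbar] [IsAlgClosure k kbar]
    (D : Subalgebra k Ω) (hD : D.FG) (f : Polynomial ↥D) :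
    ∃ Γ : AddSubgroup Ω, Γ.FG ∧
      ∀ φ ∈ specB k kbar D (Γ : Set Ω),
        ∀ n : ℤ, f.eval (n : ↥D) = 0 ↔ (f.map φ.toRingHom).eval (n : kbar) = 0 := by
  classical
  set S : Finset Ω :=
    (Finset.range (f.natDegree + 1)).image (fun i => ((f.coeff i : ↥D) : Ω)) with hS
  refine ⟨AddSubgroup.closure (S : Set Ω), ⟨S, rfl⟩, ?_⟩
  rintro φ ⟨ψ, hinj, hψ⟩ n
  have hmem : ∀ m : ℤ, ((f.eval (m : ↥D) : ↥D) : Ω) ∈ AddSubgroup.closure (S : Set Ω) := by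
    intro m
    have hval : ((f.eval (m : ↥D) : ↥D) : Ω) =
        ∑ i ∈ Finset.range (f.natDegree + 1), (m ^ i : ℤ) • ((f.coeff i : ↥D) : Ω) := by
      rw [Polynomial.eval_eq_sum_range]
      push_cast
      simp [zsmul_eq_mul, mul_comm]
    rw [hval]
    refine AddSubgroup.sum_mem _ (fun i hi => AddSubgroup.zsmul_mem _ ?_ _)
    exact AddSubgroup.subset_closure (Finset.mem_coe.mpr (Finset.mem_image_of_mem _ hi))
  have hφ : ∀ x : ↥D, φ x = ψ (Subalgebra.inclusion (le_algAdj k D _) x) := by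
    intro x; rw [← hψ]; rfl
  have key : (f.map φ.toRingHom).eval (n : kbar) = φ (f.eval (n : ↥D)) := by
    rw [Polynomial.eval_map]
    have h1 : ((n : ℤ) : kbar) = φ.toRingHom ((n : ℤ) : ↥D) := by simp
    rw [h1, Polynomial.eval₂_hom]; rfl
  constructor
  · intro h
    rw [key, h, map_zero]
  · intro h
    rw [key, hφ] at h
    have h0 : ((0 : Ω)) ∈ AddSubgroup.closure (S : Set Ω) := AddSubgroup.zero_mem _
    have := hinj ((f.eval (n : ↥D) : ↥D) : Ω) 0 (hmem n) h0 ?_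
    · exact Subtype.ext this
    · have hz : ψ ⟨(0 : Ω), subset_algAdj k D _ h0⟩ = 0 := by
        have : (⟨(0 : Ω), subset_algAdj k D _ h0⟩ : ↥(algAdj k D _)) = 0 := rfl
        rw [this, map_zero]
      rw [hz, ← h]
      rfl
end

section
/- Let M be an l×m matrix with entries in D, and let rank(M) denote its rank as a matrix over the fraction field F of D. Then there exists a nonzero c ∈ D such that for every φ ∈ Hom_k(D,k̄) with φ(c) ≠ 0, the matrix φ(M) over k̄ (obtained by applying φ entrywise) satisfies rank(φ(M)) = rank(M). -/
set_option linter.unusedSectionVars false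
set_option linter.unusedVariables false

open Matrix Module Submodule

section Aux

variable {K : Type*} [Field K]

/-- Rank of a submatrix (with arbitrary index functions) is at most the rank. -/
lemma aux_rank_submatrix_le {a b r s : ℕ} (A : Matrix (Fin a) (Fin b) K)
    (f : Fin r → Fin a) (g : Fin s → Fin b) : (A.submatrix f g).rank ≤ A.rank := by
  classical
  have h1 : A.submatrix f id = (1 : Matrix (Fin a) (Fin a) K).submatrix f (Equiv.refl (Fin a)) * A := by
    simpa using (Matrix.one_submatrix_mul f (Equiv.refl (Fin a)) A).symm
  have h2 : (A.submatrix f id).submatrix id g =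
      (A.submatrix f id) * (1 : Matrix (Fin b) (Fin b) K).submatrix (Equiv.refl (Fin b)) g := by
    simpa using (Matrix.mul_submatrix_one (Equiv.refl (Fin b)) g (A.submatrix f id)).symm
  have hsub : A.submatrix f g = (A.submatrix f id).submatrix id g := by
    simp [Matrix.submatrix_submatrix]
  calc (A.submatrix f g).rank
      = ((A.submatrix f id) * (1 : Matrix (Fin b) (Fin b) K).submatrix (Equiv.refl (Fin b)) g).rank := by
        rw [hsub, h2]
    _ ≤ (A.submatrix f id).rank := Matrix.rank_mul_le_left _ _
    _ = ((1 : Matrix (Fin a) (Fin a) K).submatrix f (Equiv.refl (Fin a)) * A).rank := by rw [h1]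
    _ ≤ A.rank := Matrix.rank_mul_le_right _ _

/-- If a square `s × s` submatrix has nonzero determinant, the rank is at least `s`. -/
lemma aux_le_rank_of_det {a b s : ℕ} (A : Matrix (Fin a) (Fin b) K)
    (f : Fin s → Fin a) (g : Fin s → Fin b) (h : (A.submatrix f g).det ≠ 0) :
    s ≤ A.rank := by
  classical
  have hU : IsUnit (A.submatrix f g) :=
    (Matrix.isUnit_iff_isUnit_det _).mpr (isUnit_iff_ne_zero.mpr h)
  have := Matrix.rank_of_isUnit _ hU
  rw [Fintype.card_fin] at this
  calc s = (A.submatrix f g).rank := this.symm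
    _ ≤ A.rank := aux_rank_submatrix_le A f g

/-- A square matrix of full rank over a field has nonzero determinant. -/
lemma aux_det_ne_zero_of_rank {r : ℕ} (A : Matrix (Fin r) (Fin r) K) (h : A.rank = r) :
    A.det ≠ 0 := by
  classical
  intro hdet
  obtain ⟨v, hv, hMv⟩ := Matrix.exists_mulVec_eq_zero_iff.mpr hdet
  have hker : v ∈ LinearMap.ker A.mulVecLin := by simpa using hMv
  have hne : LinearMap.ker A.mulVecLin ≠ ⊥ := by
    intro hb
    rw [hb, Submodule.mem_bot] at hker
    exact hv hker
  have hpos : 0 < finrank K (LinearMap.ker A.mulVecLin) := by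
    rcases Nat.eq_zero_or_pos (finrank K (LinearMap.ker A.mulVecLin)) with h0 | h0
    · exact absurd (Submodule.finrank_eq_zero.mp h0) hne
    · exact h0
  have hrn := LinearMap.finrank_range_add_finrank_ker A.mulVecLin
  have hdom : finrank K (Fin r → K) = r := by simp
  have hrk : finrank K (LinearMap.range A.mulVecLin) = r := h
  omega

/-- One can choose `r` linearly independent columns of a matrix of rank `r`. -/
lemma aux_exists_cols {a b r : ℕ} (A : Matrix (Fin a) (Fin b) K) (hA : A.rank = r) :
    ∃ g : Fin r → Fin b, LinearIndependent K (Aᵀ ∘ g) := by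
  classical
  obtain ⟨s, hsub, hspan, hind⟩ := exists_linearIndependent K (Set.range Aᵀ)
  have hfin : s.Finite := (Set.finite_range Aᵀ).subset hsub
  haveI : Fintype s := hfin.fintype
  have hcard : Fintype.card s = r := by
    have h1 : finrank K (span K s) = s.toFinset.card := finrank_span_set_eq_card hind
    have h2 : A.rank = finrank K (span K (Set.range Aᵀ)) := Matrix.rank_eq_finrank_span_cols A
    rw [← hspan, h1] at h2
    rw [Set.toFinset_card] at h2
    omega
  let e : Fin r ≃ s := (Fintype.equivFinOfCardEq hcard).symm
  choose g hg using fun x : s => hsub x.2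
  refine ⟨fun j => g (e j), ?_⟩
  have heq : Aᵀ ∘ (fun j => g (e j)) = (Subtype.val : s → (Fin a → K)) ∘ e := by
    funext j
    exact hg (e j)
  rw [heq]
  exact hind.comp e e.injective

/-- There is a nonzero `r × r` minor, where `r` is the rank. -/
lemma aux_exists_minor {a b r : ℕ} (A : Matrix (Fin a) (Fin b) K) (hA : A.rank = r) :
    ∃ (f : Fin r → Fin a) (g : Fin r → Fin b), (A.submatrix f g).det ≠ 0 := by
  classical
  obtain ⟨g, hg⟩ := aux_exists_cols A hA
  -- B := A.submatrix id g, its transpose has linearly independent rows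
  have hBt : (Aᵀ.submatrix g id) = Matrix.of (Aᵀ ∘ g) := by
    ext i j; rfl
  have hrankBt : (Aᵀ.submatrix g id).rank = r := by
    rw [hBt]
    have := hg.rank_matrix (M := Matrix.of (Aᵀ ∘ g))
    simpa using this
  obtain ⟨f, hf⟩ := aux_exists_cols (Aᵀ.submatrix g id) hrankBt
  -- C := A.submatrix f g ; Cᵀ = (Aᵀ.submatrix g id)ᵀ ∘ f
  refine ⟨f, g, ?_⟩
  have hCt : (A.submatrix f g) = Matrix.of ((Aᵀ.submatrix g id)ᵀ ∘ f) := by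
    ext i j; rfl
  have hrankC : (A.submatrix f g).rank = r := by
    rw [hCt]
    have := hf.rank_matrix (M := Matrix.of ((Aᵀ.submatrix g id)ᵀ ∘ f))
    simpa using this
  exact aux_det_ne_zero_of_rank _ hrankC

lemma aux_det_map {R S : Type*} [CommRing R] [CommRing S] {n : ℕ}
    (M : Matrix (Fin n) (Fin n) R) (f : R →+* S) : (M.map ⇑f).det = f M.det := by
  rw [RingHom.map_det, RingHom.mapMatrix_apply]

lemma aux_det_map' {k R S : Type*} [CommSemiring k] [CommRing R] [CommRing S] [Algebra k R]
    [Algebra k S] {n : ℕ} (M : Matrix (Fin n) (Fin n) R) (f : R →ₐ[k] S) :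
    (M.map ⇑f).det = f M.det :=
  aux_det_map M f.toRingHom

end Aux

/-- Lemma 2.23 of the paper. For a matrix `M` over `D` there is a nonzero
`c ∈ D` such that every specialization `φ` with `φ(c) ≠ 0` preserves the rank of `M` (the rank
of `M` being computed over the fraction field `F` of `D`). -/
theorem rank_specialization
    {Ω : Type*} [Field Ω] [IsAlgClosed Ω] [CharZero Ω]
    (k : Type*) [Field k] [Algebra k Ω]
    (kbar : Type*) [Field kbar] [Algebra k kbar] [IsAlgClosure k kbar]
    (D : Subalgebra k Ω) (hD : D.FG)
    (l m : ℕ) (M : Matrix (Fin l) (Fin m) ↥D) :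
    ∃ c : ↥D, c ≠ 0 ∧
      ∀ φ : ↥D →ₐ[k] kbar, φ c ≠ 0 →
        (M.map ⇑φ).rank = (M.map (algebraMap ↥D (FractionRing ↥D))).rank := by
  classical
  set F := FractionRing ↥D with hF
  set A : Matrix (Fin l) (Fin m) F := M.map (algebraMap ↥D F) with hA
  have hinj : Function.Injective (algebraMap ↥D F) := IsFractionRing.injective ↥D F
  obtain ⟨f, g, hdet⟩ := aux_exists_minor A rfl
  refine ⟨(M.submatrix f g).det, ?_, ?_⟩
  · intro h0
    apply hdet
    have : (A.submatrix f g) = (M.submatrix f g).map (algebraMap ↥D F) := by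
      ext i j; rfl
    rw [this, aux_det_map, h0, map_zero]
  · intro φ hφ
    -- φ applied to the chosen minor is nonzero
    have hφdet : ((M.map ⇑φ).submatrix f g).det ≠ 0 := by
      have : (M.map ⇑φ).submatrix f g = (M.submatrix f g).map ⇑φ := by ext i j; rfl
      rw [this, aux_det_map' _ φ]
      exact hφ
    have h1 : A.rank ≤ (M.map ⇑φ).rank := aux_le_rank_of_det (M.map ⇑φ) f g hφdet
    have h2 : (M.map ⇑φ).rank ≤ A.rank := by
      obtain ⟨f', g', hdet'⟩ := aux_exists_minor (M.map ⇑φ) rfl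
      have hd : (M.submatrix f' g').det ≠ 0 := by
        intro h0
        apply hdet'
        have : (M.map ⇑φ).submatrix f' g' = (M.submatrix f' g').map ⇑φ := by ext i j; rfl
        rw [this, aux_det_map' _ φ, h0, map_zero]
      have hAd : (A.submatrix f' g').det ≠ 0 := by
        have : (A.submatrix f' g') = (M.submatrix f' g').map (algebraMap ↥D F) := by
          ext i j; rfl
        rw [this, aux_det_map]
        intro h0
        exact hd (hinj (by rw [h0, map_zero]))
      exact aux_le_rank_of_det A f' g' hAd
    exact le_antisymm h2 h1
end

section
/- Let F be the fraction field of D inside Ω and n ≥ 1. Let S₁ and S₂ be finite subsets of F(x)[X,1/det(X)] (respectively, of F[X,1/det(X)]). If S₁ is contained in the ideal generated by S₂ in Ω(x)[X,1/det(X)] (respectively, in Ω[X,1/det(X)]), then there is a nonzero c ∈ D such that for every φ ∈ Hom_k(D,k̄) with φ(c) ≠ 0: every element p of S₁ ∪ S₂ specializes to a well-defined element φ(p) of k̄(x)[X,1/det(X)] (respectively, of k̄[X,1/det(X)]) — obtained by writing the coefficients of p as quotients of elements of D[x] (respectively, of D) whose denominators have nonzero image under φ and applying φ — and φ(S₁)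 is contained in the ideal generated by φ(S₂) in k̄(x)[X,1/det(X)] (respectively, in k̄[X,1/det(X)]). -/
set_option linter.unusedSectionVars false
set_option linter.unusedVariables false


noncomputable section MatrixLocalization

/-- The determinant of the generic `n × n` matrix `X = (X_{ij})`. -/
def detPoly (n : ℕ) (E : Type*) [CommRing E] : MvPolynomial (Fin n × Fin n) E :=
  (Matrix.of fun i j : Fin n => MvPolynomial.X (i, j)).det

/-- The ring `E[X, 1/det(X)]`. -/
abbrev MatrixLoc (n : ℕ) (E : Type*) [CommRing E] := Localization.Away (detPoly n E)

theorem map_detPoly {E E' : Type*} [CommRing E] [CommRing E'] (n : ℕ) (u : E →+* E') :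
    MvPolynomial.map u (detPoly n E) = detPoly n E' := by
  simp only [detPoly, RingHom.map_det]
  congr 1
  ext i j
  simp [Matrix.map_apply]

/-- The canonical map `A[X] → E[X,1/det(X)]` induced by `g : A →+* E` on coefficients. -/
def toML {A E : Type*} [CommRing A] [CommRing E] (n : ℕ) (g : A →+* E) :
    MvPolynomial (Fin n × Fin n) A →+* MatrixLoc n E :=
  (algebraMap (MvPolynomial (Fin n × Fin n) E) (MatrixLoc n E)).comp (MvPolynomial.map g)

/-- The ring homomorphism `E[X,1/det(X)] → E'[X,1/det(X)]` induced by `u : E →+* E'`. -/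
def MatrixLocMap {E E' : Type*} [CommRing E] [CommRing E'] (n : ℕ) (u : E →+* E') :
    MatrixLoc n E →+* MatrixLoc n E' :=
  Localization.awayLift (toML n u) (detPoly n E) (by
    have h : toML n u (detPoly n E)
        = algebraMap (MvPolynomial (Fin n × Fin n) E') (MatrixLoc n E') (detPoly n E') := by
      simp [toML, map_detPoly n u]
    rw [h]
    exact IsLocalization.Away.algebraMap_isUnit _)

/-- `p ∈ Frac(A)[X,1/det(X)]` specializes, along `σ : A →+* B`, to the well-defined element
`y ∈ B[X,1/det(X)]`: `p` can be written with numerator a polynomial over `A` and denominator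
`b·det(X)^N` with `b ∈ A` whose image under `σ` is nonzero, and `y` is the corresponding
quotient of the images. -/
def SpecTo {A B : Type*} [CommRing A] [IsDomain A] [CommRing B] (n : ℕ) (σ : A →+* B)
    (p : MatrixLoc n (FractionRing A)) (y : MatrixLoc n B) : Prop :=
  ∃ (P : MvPolynomial (Fin n × Fin n) A) (b : A) (N : ℕ),
    b ≠ 0 ∧ σ b ≠ 0 ∧
    p * toML n (algebraMap A (FractionRing A)) (MvPolynomial.C b * detPoly n A ^ N)
      = toML n (algebraMap A (FractionRing A)) P ∧
    y * toML n σ (MvPolynomial.C b * detPoly n A ^ N) = toML n σ P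

end MatrixLocalization

noncomputable section Embeddings

variable {Ω k : Type*} [Field Ω] [Field k] [Algebra k Ω] (D : Subalgebra k Ω)

theorem algebraMap_subalgebra_injective : Function.Injective (algebraMap ↥D Ω) :=
  Subtype.val_injective

/-- The embedding `F = Frac(D) → Ω`. -/
def embF : FractionRing ↥D →+* Ω :=
  IsFractionRing.lift (g := algebraMap ↥D Ω) (algebraMap_subalgebra_injective D)

/-- The embedding `F(x) = Frac(D[x]) → Ω(x) = Frac(Ω[x])`. -/
def embFx : FractionRing (Polynomial ↥D) →+* FractionRing (Polynomial Ω) :=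
  IsFractionRing.lift
    (g := (algebraMap (Polynomial Ω) (FractionRing (Polynomial Ω))).comp
      (Polynomial.mapRingHom (algebraMap ↥D Ω)))
    ((IsFractionRing.injective (Polynomial Ω) (FractionRing (Polynomial Ω))).comp
      (Polynomial.map_injective _ (algebraMap_subalgebra_injective D)))

/-- The induced embedding `F[X,1/det(X)] → Ω[X,1/det(X)]`. -/
def embML (n : ℕ) : MatrixLoc n (FractionRing ↥D) →+* MatrixLoc n Ω :=
  MatrixLocMap n (embF D)

/-- The induced embedding `F(x)[X,1/det(X)] → Ω(x)[X,1/det(X)]`. -/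
def embMLx (n : ℕ) :
    MatrixLoc n (FractionRing (Polynomial ↥D)) →+* MatrixLoc n (FractionRing (Polynomial Ω)) :=
  MatrixLocMap n (embFx D)

end Embeddings

/-!
For fields `F ⊆ E`, an `F`-linear retraction `E → F`, applied coefficientwise, is an
`F[X]`-linear retraction of `F[X] → E[X]`; such a retraction forces `I E[X] ∩ F[X] = I` for every
ideal `I`, and this survives localization at `det X`. With `E = Ω` (resp. `Ω(x)`) the membership
hypothesis therefore already holds over `F` (resp. `F(x)`). There the finitely many relations
`p = ∑ a_g g` only involve elements of `A[X][1/δ]` for `A = D` (resp. `D[x]`) and a single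
denominator `δ = b · det(X)^N` with `b ∈ A` nonzero. A specialization `σ` of `A` with `σ b ≠ 0`
extends to a ring homomorphism on `A[X][1/δ]`, which carries the relations over; for `A = D[x]`
it suffices that `φ` keeps the leading coefficient of `b` nonzero.
-/

open MvPolynomial

theorem Ideal.comap_map_eq_self_of_retraction {R S : Type*} [CommRing R] [CommRing S]
    [Algebra R S] (π : S →ₗ[R] R) (hπ : π 1 = 1) (I : Ideal R) :
    (I.map (algebraMap R S)).comap (algebraMap R S) = I := by
  refine le_antisymm (fun x hx => ?_) Ideal.le_comap_map
  -- `{s | ∀ t, π (s * t) ∈ I}` is an ideal of `S` containing the image of `I`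
  suffices h : ∀ s ∈ I.map (algebraMap R S), ∀ t, π (s * t) ∈ I by
    simpa [Algebra.algebraMap_eq_smul_one, hπ] using h _ hx 1
  intro s hs
  induction hs using Submodule.span_induction with
  | mem s hs =>
    obtain ⟨y, hy, rfl⟩ := hs
    intro t
    simpa [← Algebra.smul_def] using I.mul_mem_right (π t) hy
  | zero => simp
  | add s s' _ _ h h' => intro t; simpa [add_mul] using I.add_mem (h t) (h' t)
  | smul a s _ h => intro t; simpa [smul_eq_mul, mul_assoc, mul_left_comm a] using h (a * t)

section CoeffwiseLinearMap

attribute [local instance] MvPolynomial.algebraMvPolynomial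

variable {σ F E : Type*} [CommRing F] [CommRing E] [Algebra F E]

noncomputable def MvPolynomial.coeffwiseLinearMap (π : E →ₗ[F] F) :
    MvPolynomial σ E →ₗ[MvPolynomial σ F] MvPolynomial σ F where
  toFun q := AddMonoidAlgebra.map π.toAddMonoidHom q
  map_add' := AddMonoidAlgebra.map_add _
  map_smul' g q := by
    classical
    ext m
    rw [RingHom.id_apply, smul_eq_mul, Algebra.smul_def, algebraMap_def, coeff_mul,
      coeff_addMonoidAlgebraMap, coeff_mul]
    simp only [coeff_addMonoidAlgebraMap, map_sum, coeff_map, ← Algebra.smul_def, map_smul,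
      LinearMap.toAddMonoidHom_coe, smul_eq_mul]

theorem MvPolynomial.coeff_coeffwiseLinearMap (π : E →ₗ[F] F) (q : MvPolynomial σ E)
    (m : σ →₀ ℕ) : coeff m (coeffwiseLinearMap π q) = π (coeff m q) := rfl

theorem MvPolynomial.coeffwiseLinearMap_one (π : E →ₗ[F] F) (hπ : π 1 = 1) :
    coeffwiseLinearMap π (1 : MvPolynomial σ E) = 1 := by
  classical
  ext m
  rw [coeff_coeffwiseLinearMap, coeff_one, coeff_one]
  split_ifs <;> simp [hπ]

end CoeffwiseLinearMap

theorem IsLocalization.Away.mem_span_of_map_mem_span {R S R' S' : Type*} [CommRing R]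
    [CommRing S] [CommRing R'] [CommRing S'] [Algebra R S] [Algebra R R'] [Algebra S S']
    (π : S →ₗ[R] R) (hπ : π 1 = 1) {d : R} {e : S} (hde : algebraMap R S d = e)
    [IsLocalization.Away d R'] [IsLocalization.Away e S'] (g : R' →+* S')
    (hg : g.comp (algebraMap R R') = (algebraMap S S').comp (algebraMap R S))
    {T : Set R'} {p : R'} (hp : g p ∈ Ideal.span (g '' T)) : p ∈ Ideal.span T := by
  set I := (Ideal.span T).comap (algebraMap R R')
  have hI : I.map (algebraMap R R') = Ideal.span T :=
    IsLocalization.map_under (Submonoid.powers d) R' _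
  obtain ⟨a, r, hr⟩ := IsLocalization.Away.surj d p
  have hgr : algebraMap S S' (algebraMap R S r)
      ∈ (I.map (algebraMap R S)).map (algebraMap S S') := by
    rw [Ideal.map_map, ← hg, ← Ideal.map_map, hI, Ideal.map_span, ← RingHom.comp_apply,
      ← hg, RingHom.comp_apply, ← hr, map_mul]
    exact Ideal.mul_mem_right _ _ hp
  obtain ⟨_, ⟨k, rfl⟩, hk⟩ :=
    (IsLocalization.algebraMap_mem_map_algebraMap_iff (Submonoid.powers e) S' _ _).1 hgr
  have hdr : d ^ k * r ∈ I := by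
    rw [← Ideal.comap_map_eq_self_of_retraction π hπ I, Ideal.mem_comap, map_mul, map_pow, hde]
    exact hk
  have hr' : algebraMap R R' r ∈ Ideal.span T :=
    hI ▸ (IsLocalization.algebraMap_mem_map_algebraMap_iff (Submonoid.powers d) R' _ _).2
      ⟨_, ⟨k, rfl⟩, hdr⟩
  rw [← hr] at hr'
  exact (Ideal.mul_unit_mem_iff_mem _ ((IsLocalization.Away.algebraMap_isUnit d).pow a)).1 hr'

namespace Localization

variable {R P : Type*} [CommRing R] [CommRing P] (g : R →+* P) (d : R) (hd : IsUnit (g d))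

theorem awayLift_mk'_mul (x : R) :
    awayLift g d hd (IsLocalization.mk' (Away d) x (⟨d, 1, pow_one d⟩ : Submonoid.powers d))
      * g d = g x := by
  rw [← IsLocalization.Away.lift_eq (S := Away d) d hd d, ← map_mul, IsLocalization.mk'_spec,
    IsLocalization.Away.lift_eq]

theorem awayLift_mk'_eq_of_mul_eq {x : R} {t : P} (h : t * g d = g x) :
    awayLift g d hd (IsLocalization.mk' (Away d) x (⟨d, 1, pow_one d⟩ : Submonoid.powers d))
      = t :=
  hd.mul_left_inj.1 (by rw [awayLift_mk'_mul, h])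

theorem awayLift_injective (hg : Function.Injective g) :
    Function.Injective (awayLift g d hd) := by
  refine (IsLocalization.lift_injective_iff _).2 fun x y => ⟨fun hxy => ?_, fun hxy => ?_⟩
  · simpa only [IsLocalization.Away.lift_eq] using congrArg (awayLift g d hd) hxy
  · exact congrArg _ (hg hxy)

end Localization

section MatrixLoc

attribute [local instance] MvPolynomial.algebraMvPolynomial

variable {n : ℕ}

theorem MatrixLocMap_algebraMap {E E' : Type*} [CommRing E] [CommRing E'] (u : E →+* E')
    (q : MvPolynomial (Fin n × Fin n) E) :
    MatrixLocMap n u (algebraMap _ _ q) = toML n u q := by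
  unfold MatrixLocMap
  exact IsLocalization.Away.lift_eq _ _ _

theorem mem_span_of_matrixLocMap_mem_span {F E : Type*} [Field F] [Field E] (ι : F →+* E)
    {T : Set (MatrixLoc n F)} {p : MatrixLoc n F}
    (hp : MatrixLocMap n ι p ∈ Ideal.span (MatrixLocMap n ι '' T)) : p ∈ Ideal.span T := by
  let _ := ι.toAlgebra
  obtain ⟨π, hπ⟩ := (Algebra.linearMap F E).exists_leftInverse_of_injective
    (LinearMap.ker_eq_bot.2 ι.injective)
  have hπ1 : π 1 = 1 := by simpa using LinearMap.congr_fun hπ 1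
  refine IsLocalization.Away.mem_span_of_map_mem_span (R' := MatrixLoc n F)
    (S' := MatrixLoc n E) (coeffwiseLinearMap π) (coeffwiseLinearMap_one π hπ1)
    (map_detPoly n ι) (MatrixLocMap n ι) ?_ hp
  exact RingHom.ext (MatrixLocMap_algebraMap ι)

theorem toML_injective {A E : Type*} [CommRing A] [CommRing E] [IsDomain E]
    {g : A →+* E} (hg : Function.Injective g) : Function.Injective (toML n g) :=
  (IsLocalization.injective (M := Submonoid.powers (detPoly n E)) (MatrixLoc n E)
    (powers_le_nonZeroDivisors_of_noZeroDivisors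
      (Matrix.det_mvPolynomialX_ne_zero (Fin n) E))).comp (map_injective g hg)

theorem isUnit_toML_C_mul_detPoly_pow {A E : Type*} [CommRing A] [CommRing E]
    (g : A →+* E) {b : A} (hb : IsUnit (g b)) (N : ℕ) :
    IsUnit (toML n g (C b * detPoly n A ^ N)) := by
  rw [toML, RingHom.comp_apply, map_mul, map_pow, map_C, map_detPoly, map_mul, map_pow]
  exact ((hb.map C).map _).mul ((IsLocalization.Away.algebraMap_isUnit _).pow N)

theorem exists_common_denominator {A : Type*} [CommRing A] [IsDomain A]
    (T : Finset (MatrixLoc n (FractionRing A))) :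
    ∃ b : A, b ≠ 0 ∧ ∃ N : ℕ, ∀ t ∈ T, ∃ P : MvPolynomial (Fin n × Fin n) A,
      t * toML n (algebraMap A (FractionRing A)) (C b * detPoly n A ^ N)
        = toML n (algebraMap A (FractionRing A)) P := by
  -- `Frac(A)[X, 1/det]` is the localization of `A[X]` at the products `det^N · b`, `b ∈ A⁰`
  set M := (nonZeroDivisors A).map (C : A →+* MvPolynomial (Fin n × Fin n) A)
  have := IsLocalization.localization_localization_isLocalization M
    (Submonoid.powers (detPoly n (FractionRing A))) (MatrixLoc n (FractionRing A))
  obtain ⟨⟨δ, hδ⟩, hT⟩ := IsLocalization.exist_integer_multiples_of_finset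
    (IsLocalization.localizationLocalizationSubmodule M
      (Submonoid.powers (detPoly n (FractionRing A)))) T
  obtain ⟨⟨_, N, rfl⟩, ⟨_, b, hb, rfl⟩, hδbN⟩ :=
    IsLocalization.mem_localizationLocalizationSubmodule.1 hδ
  have hδ : δ = C b * detPoly n A ^ N := by
    refine map_injective _ (IsFractionRing.injective A (FractionRing A)) ?_
    rw [← algebraMap_def, hδbN]
    simp [map_detPoly, mul_comm]
  refine ⟨b, nonZeroDivisors.ne_zero hb, N, fun t ht => ?_⟩
  obtain ⟨P, hP⟩ := hT t ht
  refine ⟨P, ?_⟩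
  rw [Algebra.smul_def] at hP
  rw [← hδ, mul_comm]
  exact hP.symm

theorem exists_specialization_of_mem_span {A B : Type*} [CommRing A] [IsDomain A] [Field B]
    (S₁ S₂ : Finset (MatrixLoc n (FractionRing A)))
    (h : ∀ p ∈ S₁, p ∈ Ideal.span (S₂ : Set (MatrixLoc n (FractionRing A)))) :
    ∃ b : A, b ≠ 0 ∧ ∀ σ : A →+* B, σ b ≠ 0 →
      ∃ Φ : MatrixLoc n (FractionRing A) → MatrixLoc n B,
        (∀ p ∈ (S₁ : Set _) ∪ (S₂ : Set _), SpecTo n σ p (Φ p)) ∧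
        ∀ p ∈ S₁, Φ p ∈ Ideal.span (Φ '' ↑S₂) := by
  classical
  set ψ := algebraMap A (FractionRing A)
  choose! f hf using fun p hp => Submodule.mem_span_finset.1 (h p hp)
  set T := S₁ ∪ S₂ ∪ S₁.biUnion fun p => S₂.image (f p)
  have hS₁ : ∀ p ∈ S₁, p ∈ T := by simp_all [T]
  have hS₂ : ∀ g ∈ S₂, g ∈ T := by simp_all [T]
  have hfT : ∀ p ∈ S₁, ∀ g ∈ S₂, f p g ∈ T := fun p hp g hg => by
    simpa [T] using Or.inr (Or.inr ⟨p, hp, g, hg, rfl⟩)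
  obtain ⟨b, hb, N, hT⟩ := exists_common_denominator T
  choose! P hP using hT
  refine ⟨b, hb, fun σ hσ => ?_⟩
  set δ := C b * detPoly n A ^ N
  -- `T` lies in the image of `A[X][1/δ]`, on which `σ` induces a ring homomorphism `χ`
  have hψδ := isUnit_toML_C_mul_detPoly_pow (n := n) ψ
    ((map_ne_zero_iff ψ (IsFractionRing.injective A _)).2 hb).isUnit N
  have hσδ := isUnit_toML_C_mul_detPoly_pow (n := n) σ hσ.isUnit N
  let ι := Localization.awayLift (toML n ψ) δ hψδ
  let χ := Localization.awayLift (toML n σ) δ hσδ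
  let lift t := IsLocalization.mk' (Localization.Away δ) (P t)
    (⟨δ, 1, pow_one δ⟩ : Submonoid.powers δ)
  have hι : ∀ t ∈ T, ι (lift t) = t := fun t ht =>
    Localization.awayLift_mk'_eq_of_mul_eq _ _ hψδ (hP t ht)
  refine ⟨fun t => χ (lift t), fun p hp => ?_, fun p hp => ?_⟩
  · refine ⟨P p, b, N, hb, hσ, hP p (hp.elim (hS₁ p) (hS₂ p)), ?_⟩
    exact Localization.awayLift_mk'_mul _ _ hσδ _
  · have hι_inj := Localization.awayLift_injective _ _ hψδ
      (toML_injective (IsFractionRing.injective A _))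
    have hrel : lift p = ∑ g ∈ S₂, lift (f p g) * lift g := hι_inj <| by
      rw [map_sum, hι p (hS₁ p hp)]
      refine (Eq.trans (Finset.sum_congr rfl fun g hg => ?_) (hf p hp).2).symm
      rw [map_mul, hι _ (hfT p hp g hg), hι g (hS₂ g hg), smul_eq_mul]
    show χ (lift p) ∈ _
    rw [hrel, map_sum]
    refine Ideal.sum_mem _ fun g hg => ?_
    rw [map_mul]
    exact Ideal.mul_mem_left _ _ (Ideal.subset_span ⟨g, hg, rfl⟩)

end MatrixLoc

theorem ideal_membership_specialization_general
    {Ω : Type*} [Field Ω]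
    (k : Type*) [Field k] [Algebra k Ω]
    (kbar : Type*) [Field kbar] [Algebra k kbar]
    (D : Subalgebra k Ω) (n : ℕ) :
    -- version over `F(x)[X,1/det(X)]`
    (∀ S₁ S₂ : Finset (MatrixLoc n (FractionRing (Polynomial ↥D))),
      (∀ p ∈ S₁, embMLx D n p ∈ Ideal.span (⇑(embMLx D n) '' ↑S₂)) →
      ∃ c : ↥D, c ≠ 0 ∧ ∀ φ : ↥D →ₐ[k] kbar, φ c ≠ 0 →
        ∃ Φ : MatrixLoc n (FractionRing (Polynomial ↥D))
            → MatrixLoc n (FractionRing (Polynomial kbar)),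
          (∀ p ∈ (S₁ : Set _) ∪ (S₂ : Set _),
            SpecTo n ((algebraMap (Polynomial kbar) (FractionRing (Polynomial kbar))).comp
              (Polynomial.mapRingHom φ.toRingHom)) p (Φ p)) ∧
          ∀ p ∈ S₁, Φ p ∈ Ideal.span (Φ '' ↑S₂)) ∧
    -- version over `F[X,1/det(X)]`
    (∀ S₁ S₂ : Finset (MatrixLoc n (FractionRing ↥D)),
      (∀ p ∈ S₁, embML D n p ∈ Ideal.span (⇑(embML D n) '' ↑S₂)) →
      ∃ c : ↥D, c ≠ 0 ∧ ∀ φ : ↥D →ₐ[k] kbar, φ c ≠ 0 →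
        ∃ Φ : MatrixLoc n (FractionRing ↥D) → MatrixLoc n kbar,
          (∀ p ∈ (S₁ : Set _) ∪ (S₂ : Set _), SpecTo n φ.toRingHom p (Φ p)) ∧
          ∀ p ∈ S₁, Φ p ∈ Ideal.span (Φ '' ↑S₂)) := by
  refine ⟨fun S₁ S₂ h => ?_, fun S₁ S₂ h => ?_⟩
  · obtain ⟨b, hb, hspec⟩ :=
      exists_specialization_of_mem_span (B := FractionRing (Polynomial kbar)) S₁ S₂ fun p hp =>
        mem_span_of_matrixLocMap_mem_span (embFx D) (h p hp)
    refine ⟨b.leadingCoeff, Polynomial.leadingCoeff_ne_zero.2 hb, fun φ hφ => hspec _ ?_⟩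
    rw [RingHom.comp_apply, map_ne_zero_iff _ (IsFractionRing.injective _ _),
      ← Polynomial.leadingCoeff_ne_zero, Polynomial.coe_mapRingHom,
      Polynomial.leadingCoeff_map_of_leadingCoeff_ne_zero _ hφ]
    exact hφ
  · obtain ⟨b, hb, hspec⟩ := exists_specialization_of_mem_span (B := kbar) S₁ S₂
      fun p hp => mem_span_of_matrixLocMap_mem_span (embF D) (h p hp)
    exact ⟨b, hb, fun φ hφ => hspec φ.toRingHom hφ⟩

/-- (Lemma 3.1(1) of the paper), in its two versions: over
`F(x)[X,1/det(X)]` and (respectively) over `F[X,1/det(X)]`. -/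
theorem ideal_membership_specialization
    {Ω : Type*} [Field Ω] [IsAlgClosed Ω] [CharZero Ω]
    (k : Type*) [Field k] [Algebra k Ω]
    (kbar : Type*) [Field kbar] [Algebra k kbar] [IsAlgClosure k kbar]
    (D : Subalgebra k Ω) (hD : D.FG) (n : ℕ) (hn : 0 < n) :
    -- version over `F(x)[X,1/det(X)]`
    (∀ S₁ S₂ : Finset (MatrixLoc n (FractionRing (Polynomial ↥D))),
      (∀ p ∈ S₁, embMLx D n p ∈ Ideal.span (⇑(embMLx D n) '' ↑S₂)) →
      ∃ c : ↥D, c ≠ 0 ∧ ∀ φ : ↥D →ₐ[k] kbar, φ c ≠ 0 →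
        ∃ Φ : MatrixLoc n (FractionRing (Polynomial ↥D))
            → MatrixLoc n (FractionRing (Polynomial kbar)),
          (∀ p ∈ (S₁ : Set _) ∪ (S₂ : Set _),
            SpecTo n ((algebraMap (Polynomial kbar) (FractionRing (Polynomial kbar))).comp
              (Polynomial.mapRingHom φ.toRingHom)) p (Φ p)) ∧
          ∀ p ∈ S₁, Φ p ∈ Ideal.span (Φ '' ↑S₂)) ∧
    -- version over `F[X,1/det(X)]`
    (∀ S₁ S₂ : Finset (MatrixLoc n (FractionRing ↥D)),
      (∀ p ∈ S₁, embML D n p ∈ Ideal.span (⇑(embML D n) '' ↑S₂)) →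
      ∃ c : ↥D, c ≠ 0 ∧ ∀ φ : ↥D →ₐ[k] kbar, φ c ≠ 0 →
        ∃ Φ : MatrixLoc n (FractionRing ↥D) → MatrixLoc n kbar,
          (∀ p ∈ (S₁ : Set _) ∪ (S₂ : Set _), SpecTo n φ.toRingHom p (Φ p)) ∧
          ∀ p ∈ S₁, Φ p ∈ Ideal.span (Φ '' ↑S₂)) :=
  ideal_membership_specialization_general k kbar D n
end
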